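/- Let n ≥ 2, a ∈ ℝ, and define h(Y) = |Y − aI|²·|Y + aI|² for Y ∈ ℝ^{n×n}. Then h(Y) = |Y|⁴ + 2a²(n−2)|Y|² + 8a²|Y_a|² + n²a⁴ − 8a²·s₂(Y), where Y_a = ½(Y−Yᵀ) and s₂(Y) is the sum of principal 2×2 minors of Y. -/

import Mathlib

/-!
Both factors are quadratic in `a`: `|Y ± aI|² = |Y|² ± 2a tr Y + n a²`, so their product is
`(|Y|² + n a²)² − 4a² (tr Y)²`. It remains to express `(tr Y)²` through the norms:
`(tr Y)² = tr(Y²) + 2 s₂(Y)` and `tr(Y²) = |Y|² − 2|Y_a|²`.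
-/

open Matrix

theorem Finset.sum_product_eq_two_nsmul_sum_filter_lt {ι M : Type*} [Fintype ι] [LinearOrder ι]
    [AddCommMonoid M] (f : ι → ι → M) (hsymm : ∀ i j, f i j = f j i) (hdiag : ∀ i, f i i = 0) :
    ∑ p : ι × ι, f p.1 p.2 = 2 • ∑ p ∈ univ.filter (fun p : ι × ι => p.1 < p.2), f p.1 p.2 := by
  have hgt : ∑ p ∈ univ.filter (fun p : ι × ι => ¬ p.1 < p.2), f p.1 p.2
      = ∑ p ∈ univ.filter (fun p : ι × ι => p.2 < p.1), f p.1 p.2 := by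
    refine (sum_subset (fun p => by simpa using le_of_lt) fun p hp hp' => ?_).symm
    simp only [mem_filter, mem_univ, true_and, not_lt] at hp hp'
    rw [le_antisymm hp' hp, hdiag]
  have hswap : ∑ p ∈ univ.filter (fun p : ι × ι => p.2 < p.1), f p.1 p.2
      = ∑ p ∈ univ.filter (fun p : ι × ι => p.1 < p.2), f p.1 p.2 :=
    sum_equiv (Equiv.prodComm ι ι) (by simp) fun p _ => hsymm _ _
  rw [← sum_filter_add_sum_filter_not univ (fun p : ι × ι => p.1 < p.2), hgt, hswap, two_nsmul]

namespace Matrix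

variable {ι R : Type*} [Fintype ι] [CommRing R]

theorem trace_transpose_mul_self_add_smul_one [DecidableEq ι] (Y : Matrix ι ι R) (c : R) :
    ((Y + c • 1)ᵀ * (Y + c • 1)).trace
      = (Yᵀ * Y).trace + 2 * c * Y.trace + Fintype.card ι * c ^ 2 := by
  simp only [transpose_add, transpose_smul, transpose_one, add_mul, mul_add, trace_add,
    smul_mul_assoc, mul_smul_comm, mul_one, one_mul, trace_smul, trace_one,
    trace_transpose, smul_eq_mul]
  ring

theorem trace_transpose_mul_self_sub_transpose (Y : Matrix ι ι R) :
    ((Y - Yᵀ)ᵀ * (Y - Yᵀ)).trace = 2 * ((Yᵀ * Y).trace - (Y * Y).trace) := by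
  simp only [transpose_sub, transpose_transpose, sub_mul, mul_sub, trace_sub]
  rw [trace_mul_comm Y Yᵀ, ← trace_transpose (Yᵀ * Yᵀ), transpose_mul, transpose_transpose]
  ring

theorem two_mul_sum_principal_minors_two [LinearOrder ι] (Y : Matrix ι ι R) :
    2 * ∑ p ∈ Finset.univ.filter (fun p : ι × ι => p.1 < p.2),
        (Y p.1 p.1 * Y p.2 p.2 - Y p.1 p.2 * Y p.2 p.1)
      = Y.trace ^ 2 - (Y * Y).trace := by
  rw [two_mul, ← two_nsmul, ← Finset.sum_product_eq_two_nsmul_sum_filter_lt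
    (fun i j => Y i i * Y j j - Y i j * Y j i) (fun i j => by ring) (fun i => sub_self _)]
  simp only [Fintype.sum_prod_type, Finset.sum_sub_distrib, trace, diag, mul_apply, sq,
    Finset.sum_mul_sum]

end Matrix

theorem double_well_identity_general_general (n : ℕ) (a : ℝ)
    (Y : Matrix (Fin n) (Fin n) ℝ) :
    ((Y - a • 1)ᵀ * (Y - a • 1)).trace * ((Y + a • 1)ᵀ * (Y + a • 1)).trace =
      ((Yᵀ * Y).trace)^2 + 2 * a^2 * ((n : ℝ) - 2) * (Yᵀ * Y).trace +
      8 * a^2 * ((((1/2 : ℝ) • (Y - Yᵀ))ᵀ * ((1/2 : ℝ) • (Y - Yᵀ))).trace) +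
      (n : ℝ)^2 * a^4 -
      8 * a^2 * ∑ p ∈ Finset.univ.filter (fun p : Fin n × Fin n => p.1 < p.2),
        (Y p.1 p.1 * Y p.2 p.2 - Y p.1 p.2 * Y p.2 p.1) := by
  have hskew : (((1/2 : ℝ) • (Y - Yᵀ))ᵀ * ((1/2 : ℝ) • (Y - Yᵀ))).trace
      = ((Yᵀ * Y).trace - (Y * Y).trace) / 2 := by
    rw [transpose_smul, smul_mul_smul_comm, trace_smul, trace_transpose_mul_self_sub_transpose,
      smul_eq_mul]
    ring
  have hminors := two_mul_sum_principal_minors_two Y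
  rw [sub_eq_add_neg Y, ← neg_smul, trace_transpose_mul_self_add_smul_one,
    trace_transpose_mul_self_add_smul_one, Fintype.card_fin, hskew]
  linear_combination 4 * a ^ 2 * hminors

theorem double_well_identity_general (n : ℕ) (hn : 2 ≤ n) (a : ℝ)
    (Y : Matrix (Fin n) (Fin n) ℝ) :
    ((Y - a • 1)ᵀ * (Y - a • 1)).trace * ((Y + a • 1)ᵀ * (Y + a • 1)).trace =
      ((Yᵀ * Y).trace)^2 + 2 * a^2 * ((n : ℝ) - 2) * (Yᵀ * Y).trace +
      8 * a^2 * ((((1/2 : ℝ) • (Y - Yᵀ))ᵀ * ((1/2 : ℝ) • (Y - Yᵀ))).trace) +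
      (n : ℝ)^2 * a^4 -
      8 * a^2 * ∑ p ∈ Finset.univ.filter (fun p : Fin n × Fin n => p.1 < p.2),
        (Y p.1 p.1 * Y p.2 p.2 - Y p.1 p.2 * Y p.2 p.1) :=
  double_well_identity_general_general n a Y
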